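/- Suppose forests F and G satisfy that running the piece-decomposition matching process on str(F) with threshold k produces a complete matching (every parenthesis of F is in a removed piece that is either small, of size at most 4k, or exactly matched in str(G) up to an index shift of at most k). Then ted(F,G) = O(k^2 log |F|): the matched pieces, truncated by 2k characters at each end, together with deletions for all unmatched positions, form a valid tree alignment of cost O(k^2 log |F|). -/

import Mathlib

/-- Rooted ordered labeled trees. -/
inductive LTree (α : Type) : Type where
  | node : α → List (LTree α) → LTree α

mutual
  /-- Number of nodes of a labeled tree. -/
  def tsize {α : Type} : LTree α → ℕ
    | .node _ ts => 1 + fsize ts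
  /-- Number of nodes of a labeled forest. -/
  def fsize {α : Type} : List (LTree α) → ℕ
    | [] => 0
    | t :: ts => tsize t + fsize ts
end

mutual
  /-- Parenthesis representation of a tree: `(_a · str(children) · )_a`. -/
  def pstr {α : Type} : LTree α → List (Bool × α)
    | .node a ts => (true, a) :: (pforest ts ++ [(false, a)])
  /-- Parenthesis representation of a forest. -/
  def pforest {α : Type} : List (LTree α) → List (Bool × α)
    | [] => []
    | t :: ts => pstr t ++ pforest ts
end

mutual
  /-- The pair `(o(u), c(u))` of positions, in the parenthesis representation,
  of the node `u` of a tree addressed by a list of child indices. -/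
  def tpos {α : Type} : LTree α → List ℕ → Option (ℕ × ℕ)
    | t, [] => some (0, (pstr t).length - 1)
    | .node _ ts, k :: addr => (fpos ts (k :: addr)).map (fun p => (p.1 + 1, p.2 + 1))
  /-- The pair `(o(u), c(u))` of positions of the node of a forest addressed by a
  nonempty list of child indices (the first index selects the tree). -/
  def fpos {α : Type} : List (LTree α) → List ℕ → Option (ℕ × ℕ)
    | [], _ => none
    | _ :: _, [] => none
    | t :: _, 0 :: addr => tpos t addr
    | t :: ts, (k + 1) :: addr =>
        (fpos ts (k :: addr)).map (fun p => (p.1 + (pstr t).length, p.2 + (pstr t).length))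
end

mutual
  /-- The subtree of a tree at a given address. -/
  def tSub {α : Type} : LTree α → List ℕ → Option (LTree α)
    | t, [] => some t
    | .node _ ts, k :: addr => fSub ts (k :: addr)
  /-- The subtree of a forest at a given (nonempty) address. -/
  def fSub {α : Type} : List (LTree α) → List ℕ → Option (LTree α)
    | [], _ => none
    | _ :: _, [] => none
    | t :: _, 0 :: addr => tSub t addr
    | _ :: ts, (k + 1) :: addr => fSub ts (k :: addr)
end

/-- One node edit on a forest: relabel a node, delete a node (splicing its children
into its place), or insert a node (gathering a contiguous run of siblings as its
children); edits may occur at any depth. -/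
inductive FStep {α : Type} : List (LTree α) → List (LTree α) → Prop where
  | relabel (pre post ts : List (LTree α)) (a b : α) :
      FStep (pre ++ LTree.node a ts :: post) (pre ++ LTree.node b ts :: post)
  | delete (pre post ts : List (LTree α)) (a : α) :
      FStep (pre ++ LTree.node a ts :: post) (pre ++ ts ++ post)
  | insert (pre mid post : List (LTree α)) (a : α) :
      FStep (pre ++ mid ++ post) (pre ++ LTree.node a mid :: post)
  | congr (pre post ts ts' : List (LTree α)) (a : α) :
      FStep ts ts' → FStep (pre ++ LTree.node a ts :: post) (pre ++ LTree.node a ts' :: post)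

/-- `FEdits n F G` : `G` can be obtained from `F` by `n` node edits. -/
inductive FEdits {α : Type} : ℕ → List (LTree α) → List (LTree α) → Prop where
  | refl (F : List (LTree α)) : FEdits 0 F F
  | step {n : ℕ} {F G H : List (LTree α)} :
      FStep F G → FEdits n G H → FEdits (n + 1) F H

/-- Tree edit distance: minimum number of node insertions, deletions, and label
substitutions transforming forest `F` into forest `G`. -/
noncomputable def ted {α : Type} (F G : List (LTree α)) : ℕ :=
  sInf {n | FEdits n F G}

/-- A monotone matching: a list of index pairs strictly increasing in both
coordinates. -/
def IsMatching (M : List (ℕ × ℕ)) : Prop :=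
  M.Chain' (fun p q => p.1 < q.1 ∧ p.2 < q.2)

/-- All pairs of the matching are within the bounds of the two strings. -/
def InBounds {β : Type} (s t : List β) (M : List (ℕ × ℕ)) : Prop :=
  ∀ p ∈ M, p.1 < s.length ∧ p.2 < t.length

/-- The cost of the alignment represented by the monotone matching `M` of `s` and
`t` : deletions in `s`, plus deletions in `t`, plus substitutions (aligned pairs of
distinct characters). -/
def alignCost {β : Type} [DecidableEq β] (s t : List β) (d : β) (M : List (ℕ × ℕ)) : ℕ :=
  (s.length - M.length) + (t.length - M.length) +
    M.countP (fun p => decide (s.getD p.1 d ≠ t.getD p.2 d))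

/-- A tree alignment of forests `F` and `G` : an alignment (monotone matching) of
their parenthesis representations such that, for each node `u` of `F`, either both
parentheses of `u` are deleted, or there is a node `v` of `G` whose opening and
closing parentheses are aligned with those of `u`. -/
def TreeAligned {α : Type} (F G : List (LTree α)) (M : List (ℕ × ℕ)) : Prop :=
  IsMatching M ∧ InBounds (pforest F) (pforest G) M ∧
    ∀ a ou cu, fpos F a = some (ou, cu) →
      ((∀ q ∈ M, q.1 ≠ ou ∧ q.1 ≠ cu) ∨
        ∃ b ov cv, fpos G b = some (ov, cv) ∧ (ou, ov) ∈ M ∧ (cu, cv) ∈ M)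

/-- The substring `s[i..j)`. -/
def seg {γ : Type} (s : List γ) (i j : ℕ) : List γ := (s.take j).drop i

/-- A piece of the parenthesis representation of a forest: either a subforest
`str(F)[i..j)` (a balanced substring) or a context
`(str(F)[i₁..j₁), str(F)[i₂..j₂))`. -/
inductive Piece : Type where
  | fpiece (i j : ℕ)
  | cpiece (i₁ j₁ i₂ j₂ : ℕ)

/-- Validity of a piece of `str(F)` : a subforest piece is a balanced substring
(the representation of some forest); a context piece satisfies
`i₁ < j₁ < i₂ < j₂`, with `str(F)[i₁..j₂)` the representation of a tree and
`str(F)[j₁..i₂)` the representation of a forest. -/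
def ValidPiece {α : Type} (F : List (LTree α)) : Piece → Prop
  | .fpiece i j => i ≤ j ∧ j ≤ (pforest F).length ∧
      ∃ ts : List (LTree α), seg (pforest F) i j = pforest ts
  | .cpiece i₁ j₁ i₂ j₂ => i₁ < j₁ ∧ j₁ < i₂ ∧ i₂ < j₂ ∧ j₂ ≤ (pforest F).length ∧
      (∃ t : LTree α, seg (pforest F) i₁ j₂ = pstr t) ∧
      (∃ ts : List (LTree α), seg (pforest F) j₁ i₂ = pforest ts)

/-- The set of positions covered by a piece. -/
def Covers : Piece → ℕ → Prop
  | .fpiece i j, p => i ≤ p ∧ p < j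
  | .cpiece i₁ j₁ i₂ j₂, p => (i₁ ≤ p ∧ p < j₁) ∨ (i₂ ≤ p ∧ p < j₂)

/-- The size of a piece. -/
def psize : Piece → ℕ
  | .fpiece i j => j - i
  | .cpiece i₁ j₁ i₂ j₂ => (j₁ - i₁) + (j₂ - i₂)

/-- `a` and `b` differ by at most `k`. -/
def Near (k a b : ℕ) : Prop := a ≤ b + k ∧ b ≤ a + k

/-- A piece of `str(F)` has an exact match in `str(G)` whose starting position(s)
are shifted by at most `k`; for contexts, the two matched parts must again form a
valid context of `G`. -/
def MatchedPiece {α : Type} (F G : List (LTree α)) (k : ℕ) : Piece → Prop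
  | .fpiece i j => ∃ i', Near k i i' ∧ i' + (j - i) ≤ (pforest G).length ∧
      seg (pforest F) i j = seg (pforest G) i' (i' + (j - i))
  | .cpiece i₁ j₁ i₂ j₂ => ∃ i₁' i₂',
      Near k i₁ i₁' ∧ Near k i₂ i₂' ∧
      i₁' + (j₁ - i₁) < i₂' ∧ i₂' + (j₂ - i₂) ≤ (pforest G).length ∧
      seg (pforest F) i₁ j₁ = seg (pforest G) i₁' (i₁' + (j₁ - i₁)) ∧
      seg (pforest F) i₂ j₂ = seg (pforest G) i₂' (i₂' + (j₂ - i₂)) ∧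
      (∃ t : LTree α, seg (pforest G) i₁' (i₂' + (j₂ - i₂)) = pstr t) ∧
      (∃ ts : List (LTree α),
        seg (pforest G) (i₁' + (j₁ - i₁)) i₂' = pforest ts)

/-!
Keep a node of `F` when both its parentheses lie in the core of one matched piece, i.e. at
distance at least `2k` from the ends of the part of the piece containing them, and send each kept
position to its place in the exact occurrence of its piece in `str(G)`. Since every position moves
by at most `k`, while positions of different blocks are more than `2k` apart, this is strictly
increasing; and a kept node goes to a node of `G`, because its interior is a balanced word copied
exactly (for a context, up to the balanced forest filling the hole). So the kept nodes form an
exact tree alignment. A piece has at most `8k` positions outside its core (at most `4k` in all if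
it is small), and every other unkept position is the mate of one of them, so at most
`16k · #pieces = O(k² log |F|)` positions of `str(F)` are unaligned, and no more of `str(G)` since
`|G| ≤ |F|`. Deleting the unaligned nodes of both forests leaves the same forest, which bounds
`ted(F,G)` by half the cost of the alignment.
-/

section Basic

variable {α : Type}

theorem pstr_node (a : α) (ts : List (LTree α)) :
    pstr (.node a ts) = (true, a) :: (pforest ts ++ [(false, a)]) := by
  simp [pstr]

theorem pforest_append (X Y : List (LTree α)) : pforest (X ++ Y) = pforest X ++ pforest Y := by
  induction X with
  | nil => simp [pforest]
  | cons t ts ih => simp [pforest, ih]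

theorem pforest_singleton (t : LTree α) : pforest [t] = pstr t := by
  simp [pforest]

theorem fsize_append (X Y : List (LTree α)) : fsize (X ++ Y) = fsize X + fsize Y := by
  induction X with
  | nil => simp [fsize]
  | cons t ts ih => simp [fsize, ih]; omega

mutual
theorem length_pstr (t : LTree α) : (pstr t).length = 2 * tsize t := by
  cases t with
  | node a ts => simp [pstr, tsize, length_pforest ts]; ring
theorem length_pforest (ts : List (LTree α)) : (pforest ts).length = 2 * fsize ts := by
  cases ts with
  | nil => rfl
  | cons t ts => simp [pforest, fsize, length_pstr t, length_pforest ts]; ring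
end

end Basic

section Balance

variable {α : Type}

def balance (s : List (Bool × α)) : ℤ := (s.map fun ch => if ch.1 then 1 else -1).sum

@[simp] theorem balance_nil : balance ([] : List (Bool × α)) = 0 := rfl

@[simp] theorem balance_append (s t : List (Bool × α)) :
    balance (s ++ t) = balance s + balance t := by
  simp [balance]

@[simp] theorem balance_cons (ch : Bool × α) (s : List (Bool × α)) :
    balance (ch :: s) = (if ch.1 then 1 else -1) + balance s := by
  simp [balance]

def IsBalanced (s : List (Bool × α)) : Prop := balance s = 0 ∧ ∀ m, 0 ≤ balance (s.take m)

mutual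
theorem balance_pstr (t : LTree α) : balance (pstr t) = 0 := by
  cases t with
  | node a ts => simp [pstr, balance_pforest ts]
theorem balance_pforest (ts : List (LTree α)) : balance (pforest ts) = 0 := by
  cases ts with
  | nil => rfl
  | cons t ts => simp [pforest, balance_pstr t, balance_pforest ts]
end

mutual
theorem one_le_balance_take_pstr (t : LTree α) {m : ℕ} (hm : m < (pstr t).length)
    (h0 : 0 < m) : 1 ≤ balance ((pstr t).take m) := by
  cases t with
  | node a ts =>
    obtain ⟨m, rfl⟩ : ∃ m', m = m' + 1 := ⟨m - 1, by omega⟩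
    have hm' : m ≤ (pforest ts).length := by simp [pstr] at hm; omega
    simp only [pstr, List.take_succ_cons, balance_cons, List.take_append_of_le_length hm']
    have := balance_take_pforest_nonneg ts m
    simp; omega
theorem balance_take_pforest_nonneg (ts : List (LTree α)) (m : ℕ) :
    0 ≤ balance ((pforest ts).take m) := by
  cases ts with
  | nil => simp [pforest]
  | cons t ts =>
    simp only [pforest]
    rcases lt_or_ge m (pstr t).length with h | h
    · rw [List.take_append_of_le_length h.le]
      rcases Nat.eq_zero_or_pos m with h0 | h0
      · simp [h0]
      · have := one_le_balance_take_pstr t h h0; omega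
    · rw [List.take_append, List.take_of_length_le h, balance_append, balance_pstr]
      simpa using balance_take_pforest_nonneg ts (m - (pstr t).length)
end

theorem isBalanced_pforest (ts : List (LTree α)) : IsBalanced (pforest ts) :=
  ⟨balance_pforest ts, balance_take_pforest_nonneg ts⟩

theorem IsBalanced.replace_middle {X W W' Y : List (Bool × α)}
    (h : IsBalanced (X ++ W ++ Y)) (hW : IsBalanced W) (hW' : IsBalanced W') :
    IsBalanced (X ++ W' ++ Y) := by
  obtain ⟨htot, hpre⟩ := h
  simp only [List.append_assoc] at hpre ⊢
  have hX : 0 ≤ balance X := by simpa using hpre X.length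
  refine ⟨by simp_all [hW.1, hW'.1], fun m => ?_⟩
  rcases le_or_gt m X.length with h1 | h1
  · simpa [List.take_append_of_le_length h1] using hpre m
  obtain ⟨r, rfl⟩ : ∃ r, m = X.length + r := ⟨m - X.length, by omega⟩
  rw [List.take_length_add_append]
  rcases le_or_gt r W'.length with h2 | h2
  · simpa [List.take_append_of_le_length h2] using add_nonneg hX (hW'.2 r)
  · obtain ⟨u, rfl⟩ : ∃ u, r = W'.length + u := ⟨r - W'.length, by omega⟩
    have := hpre (X.length + (W.length + u))
    rw [List.take_length_add_append, List.take_length_add_append] at this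
    simpa [List.take_length_add_append, hW.1, hW'.1] using this

end Balance

section Segments

variable {γ : Type}

theorem seg_eq_take_drop (s : List γ) (i j : ℕ) : seg s i j = (s.drop i).take (j - i) := by
  simp [seg, List.drop_take]

theorem length_seg (s : List γ) (i j : ℕ) : (seg s i j).length = min j s.length - i := by
  simp [seg]

theorem seg_append_seg (s : List γ) {i j l : ℕ} (hij : i ≤ j) (hjl : j ≤ l) :
    seg s i j ++ seg s j l = seg s i l := by
  rw [seg_eq_take_drop, seg_eq_take_drop, seg_eq_take_drop, show l - i = (j - i) + (l - j) by omega,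
    List.take_add, List.drop_drop, show i + (j - i) = j by omega]

theorem seg_zero (s : List γ) (j : ℕ) : seg s 0 j = s.take j := by
  simp [seg]

theorem take_seg (s : List γ) {i j m : ℕ} (h : i + m ≤ j) :
    (seg s i j).take m = seg s i (i + m) := by
  rw [seg_eq_take_drop, seg_eq_take_drop, List.take_take]
  congr 1; omega

theorem getElem?_seg (s : List γ) {i j m : ℕ} (h : i + m < j) : (seg s i j)[m]? = s[i + m]? := by
  simp [seg, List.getElem?_drop, h]

theorem seg_succ (s : List γ) {i j : ℕ} {ch : γ} (hij : i ≤ j) (h : s[j]? = some ch) :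
    seg s i (j + 1) = seg s i j ++ [ch] := by
  rw [seg_eq_take_drop, seg_eq_take_drop, show j + 1 - i = (j - i) + 1 by omega, List.take_add_one,
    List.getElem?_drop, show i + (j - i) = j by omega, h]
  rfl

theorem seg_cons_succ (ch : γ) (s : List γ) (i j : ℕ) :
    seg (ch :: s) (i + 1) (j + 1) = seg s i j := by
  simp [seg]

theorem seg_append_of_le_length (X Y : List γ) {i j : ℕ} (h : j ≤ X.length) :
    seg (X ++ Y) i j = seg X i j := by
  simp [seg, List.take_append_of_le_length h]

theorem seg_append_length_add (X Y : List γ) (i j : ℕ) :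
    seg (X ++ Y) (X.length + i) (X.length + j) = seg Y i j := by
  simp [seg, List.take_append, List.drop_append]

theorem seg_middle {A W B : List γ} {x y : ℕ} (hy : y ≤ W.length) :
    seg (A ++ W ++ B) (A.length + x) (A.length + y) = seg W x y := by
  rw [List.append_assoc, seg_append_length_add, seg_append_of_le_length _ _ hy]

theorem getElem?_middle {A W B : List γ} {p : ℕ} (h : p < W.length) :
    (A ++ W ++ B)[A.length + p]? = W[p]? := by
  rw [List.append_assoc, List.getElem?_append_right (by omega),
    List.getElem?_append_left (by omega)]
  simp

theorem take_append_seg_append_drop (s : List γ) {i j : ℕ} (hij : i ≤ j) :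
    s.take i ++ seg s i j ++ s.drop j = s := by
  rw [List.append_assoc, seg_eq_take_drop]
  conv_rhs => rw [← List.take_append_drop i s, ← List.take_append_drop (j - i) (s.drop i)]
  rw [List.drop_drop, show i + (j - i) = j by omega]

theorem seg_seg (s : List γ) {i j a b : ℕ} (h : i + b ≤ j) :
    seg (seg s i j) a b = seg s (i + a) (i + b) := by
  simp only [seg_eq_take_drop, List.drop_take, List.take_take, List.drop_drop]
  congr 1; omega

theorem getElem?_eq_of_seg_eq {s t : List γ} {i j i' : ℕ}
    (hseq : seg s i j = seg t i' (i' + (j - i))) {p : ℕ} (hp : i ≤ p) (hpj : p < j) :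
    t[p - i + i']? = s[p]? := by
  have h : (seg s i j)[p - i]? = (seg t i' (i' + (j - i)))[p - i]? := by rw [hseq]
  rw [getElem?_seg _ (by omega), getElem?_seg _ (by omega)] at h
  rw [show p - i + i' = i' + (p - i) by omega, ← h, show i + (p - i) = p by omega]

theorem seg_eq_seg_of_seg_eq {s t : List γ} {i j i' : ℕ}
    (hseq : seg s i j = seg t i' (i' + (j - i))) {x y : ℕ} (hx : i ≤ x) (hxy : x ≤ y)
    (hy : y ≤ j) : seg s x y = seg t (x - i + i') (y - i + i') := by
  have hs := seg_seg s (a := x - i) (b := y - i) (show i + (y - i) ≤ j by omega)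
  have ht := seg_seg t (i := i') (a := x - i) (b := y - i)
    (show i' + (y - i) ≤ i' + (j - i) by omega)
  rw [hseq, ht, show i + (x - i) = x by omega, show i + (y - i) = y by omega] at hs
  rw [← hs]
  congr 1 <;> omega

end Segments

section Nodes

variable {α : Type}

mutual
def tnodes : LTree α → List (ℕ × ℕ)
  | .node _ ts => (0, (pforest ts).length + 1) :: (fnodes ts).map (fun q => (q.1 + 1, q.2 + 1))
def fnodes : List (LTree α) → List (ℕ × ℕ)
  | [] => []
  | t :: ts => tnodes t ++ (fnodes ts).map (fun q => (q.1 + (pstr t).length, q.2 + (pstr t).length))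
end

mutual
theorem tnodes_bounds (t : LTree α) : ∀ q ∈ tnodes t, q.1 < q.2 ∧ q.2 < (pstr t).length := by
  cases t with
  | node a ts =>
    intro q hq
    simp only [tnodes, List.mem_cons, List.mem_map] at hq
    rcases hq with rfl | ⟨p, hp, rfl⟩
    · simp [pstr_node]
    · have := fnodes_bounds ts p hp
      simp [pstr_node]; omega
theorem fnodes_bounds (ts : List (LTree α)) :
    ∀ q ∈ fnodes ts, q.1 < q.2 ∧ q.2 < (pforest ts).length := by
  cases ts with
  | nil => simp [fnodes]
  | cons t ts =>
    intro q hq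
    simp only [fnodes, List.mem_append, List.mem_map] at hq
    rcases hq with h | ⟨p, hp, rfl⟩
    · have := tnodes_bounds t q h
      simp [pforest]; omega
    · have := fnodes_bounds ts p hp
      simp [pforest]; omega
end

mutual
theorem tnodes_getElem? (t : LTree α) : ∀ q ∈ tnodes t,
    ∃ a, (pstr t)[q.1]? = some (true, a) ∧ (pstr t)[q.2]? = some (false, a) := by
  cases t with
  | node a ts =>
    intro q hq
    simp only [tnodes, List.mem_cons, List.mem_map] at hq
    rcases hq with rfl | ⟨p, hp, rfl⟩
    · exact ⟨a, by simp [pstr_node], by simp [pstr_node]⟩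
    · obtain ⟨b, h1, h2⟩ := fnodes_getElem? ts p hp
      have hb := fnodes_bounds ts p hp
      refine ⟨b, ?_, ?_⟩ <;> simp only [pstr_node, List.getElem?_cons_succ]
      · rwa [List.getElem?_append_left (by omega)]
      · rwa [List.getElem?_append_left (by omega)]
theorem fnodes_getElem? (ts : List (LTree α)) : ∀ q ∈ fnodes ts,
    ∃ a, (pforest ts)[q.1]? = some (true, a) ∧ (pforest ts)[q.2]? = some (false, a) := by
  cases ts with
  | nil => simp [fnodes]
  | cons t ts =>
    intro q hq
    simp only [fnodes, List.mem_append, List.mem_map] at hq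
    rcases hq with h | ⟨p, hp, rfl⟩
    · obtain ⟨b, h1, h2⟩ := tnodes_getElem? t q h
      have hb := tnodes_bounds t q h
      refine ⟨b, ?_, ?_⟩ <;> simp only [pforest]
      · rwa [List.getElem?_append_left (by omega)]
      · rwa [List.getElem?_append_left (by omega)]
    · obtain ⟨b, h1, h2⟩ := fnodes_getElem? ts p hp
      refine ⟨b, ?_, ?_⟩ <;> simp only [pforest]
      · rw [List.getElem?_append_right (by omega)]; simpa using h1
      · rw [List.getElem?_append_right (by omega)]; simpa using h2
end

mutual
theorem tnodes_interior (t : LTree α) : ∀ q ∈ tnodes t,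
    ∃ cs : List (LTree α), seg (pstr t) (q.1 + 1) q.2 = pforest cs := by
  cases t with
  | node a ts =>
    intro q hq
    simp only [tnodes, List.mem_cons, List.mem_map] at hq
    rcases hq with rfl | ⟨p, hp, rfl⟩
    · refine ⟨ts, ?_⟩
      rw [pstr_node, ← List.cons_append, seg_append_of_le_length _ _ (by simp), seg_cons_succ,
        seg_zero, List.take_length]
    · obtain ⟨cs, hcs⟩ := fnodes_interior ts p hp
      have hb := fnodes_bounds ts p hp
      refine ⟨cs, ?_⟩
      rw [pstr_node, seg_cons_succ, seg_append_of_le_length _ _ (by omega), hcs]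
theorem fnodes_interior (ts : List (LTree α)) : ∀ q ∈ fnodes ts,
    ∃ cs : List (LTree α), seg (pforest ts) (q.1 + 1) q.2 = pforest cs := by
  cases ts with
  | nil => simp [fnodes]
  | cons t ts =>
    intro q hq
    simp only [fnodes, List.mem_append, List.mem_map] at hq
    rcases hq with h | ⟨p, hp, rfl⟩
    · obtain ⟨cs, hcs⟩ := tnodes_interior t q h
      have hb := tnodes_bounds t q h
      exact ⟨cs, by rw [pforest, seg_append_of_le_length _ _ (by omega), hcs]⟩
    · obtain ⟨cs, hcs⟩ := fnodes_interior ts p hp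
      refine ⟨cs, ?_⟩
      rw [pforest, show p.1 + (pstr t).length + 1 = (pstr t).length + (p.1 + 1) by omega,
        show p.2 + (pstr t).length = (pstr t).length + p.2 by omega, seg_append_length_add, hcs]
end

theorem isBalanced_fnodes_interior {ts : List (LTree α)} {q : ℕ × ℕ} (hq : q ∈ fnodes ts) :
    IsBalanced (seg (pforest ts) (q.1 + 1) q.2) := by
  obtain ⟨cs, hcs⟩ := fnodes_interior ts q hq
  exact hcs ▸ isBalanced_pforest cs

mutual
theorem exists_tnodes_of_lt (t : LTree α) :
    ∀ p < (pstr t).length, ∃ q ∈ tnodes t, p = q.1 ∨ p = q.2 := by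
  cases t with
  | node a ts =>
    intro p hp
    have hl : (pstr (.node a ts)).length = (pforest ts).length + 2 := by simp [pstr_node]
    have hroot : (0, (pforest ts).length + 1) ∈ tnodes (.node a ts) := by simp [tnodes]
    rcases Nat.eq_zero_or_pos p with rfl | h0
    · exact ⟨_, hroot, Or.inl rfl⟩
    rcases (show p = (pforest ts).length + 1 ∨ p - 1 < (pforest ts).length by omega) with h | h
    · exact ⟨_, hroot, Or.inr h⟩
    · obtain ⟨q, hq, hor⟩ := exists_fnodes_of_lt ts (p - 1) h
      refine ⟨(q.1 + 1, q.2 + 1), ?_, by omega⟩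
      simp only [tnodes, List.mem_cons, List.mem_map]
      exact Or.inr ⟨q, hq, rfl⟩
theorem exists_fnodes_of_lt (ts : List (LTree α)) :
    ∀ p < (pforest ts).length, ∃ q ∈ fnodes ts, p = q.1 ∨ p = q.2 := by
  cases ts with
  | nil => simp [pforest]
  | cons t ts =>
    intro p hp
    rcases lt_or_ge p (pstr t).length with h | h
    · obtain ⟨q, hq, hor⟩ := exists_tnodes_of_lt t p h
      exact ⟨q, by simp [fnodes, hq], hor⟩
    · have hp' : p - (pstr t).length < (pforest ts).length := by simp [pforest] at hp; omega
      obtain ⟨q, hq, hor⟩ := exists_fnodes_of_lt ts (p - (pstr t).length) hp'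
      refine ⟨(q.1 + (pstr t).length, q.2 + (pstr t).length), ?_, by omega⟩
      simp only [fnodes, List.mem_append, List.mem_map]
      exact Or.inr ⟨q, hq, rfl⟩
end

mutual
theorem mem_tnodes_of_tpos (t : LTree α) : ∀ addr q, tpos t addr = some q → q ∈ tnodes t := by
  cases t with
  | node a ts =>
    intro addr q h
    cases addr with
    | nil => simp [tpos, pstr_node] at h; simp [tnodes, ← h]
    | cons kk addr =>
      simp only [tpos, Option.map_eq_some_iff] at h
      obtain ⟨p, hp, rfl⟩ := h
      simp only [tnodes, List.mem_cons, List.mem_map]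
      exact Or.inr ⟨p, mem_fnodes_of_fpos ts (kk :: addr) p hp, rfl⟩
theorem mem_fnodes_of_fpos (ts : List (LTree α)) :
    ∀ addr q, fpos ts addr = some q → q ∈ fnodes ts := by
  cases ts with
  | nil => simp [fpos]
  | cons t ts =>
    intro addr q h
    match addr with
    | [] => simp [fpos] at h
    | 0 :: addr => simp [fnodes, mem_tnodes_of_tpos t addr q (by simpa [fpos] using h)]
    | (kk + 1) :: addr =>
      simp only [fpos, Option.map_eq_some_iff] at h
      obtain ⟨p, hp, rfl⟩ := h
      simp only [fnodes, List.mem_append, List.mem_map]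
      exact Or.inr ⟨p, mem_fnodes_of_fpos ts (kk :: addr) p hp, rfl⟩
end

theorem fpos_nil (ts : List (LTree α)) : fpos ts [] = none := by
  cases ts <;> simp [fpos]

mutual
theorem exists_tpos_of_mem_tnodes (t : LTree α) : ∀ q ∈ tnodes t, ∃ addr, tpos t addr = some q := by
  cases t with
  | node a ts =>
    intro q hq
    simp only [tnodes, List.mem_cons, List.mem_map] at hq
    rcases hq with rfl | ⟨p, hp, rfl⟩
    · exact ⟨[], by simp [tpos, pstr_node]⟩
    · obtain ⟨addr, haddr⟩ := exists_fpos_of_mem_fnodes ts p hp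
      match addr, haddr with
      | [], haddr => simp [fpos_nil] at haddr
      | kk :: addr, haddr => exact ⟨kk :: addr, by simp [tpos, haddr]⟩
theorem exists_fpos_of_mem_fnodes (ts : List (LTree α)) :
    ∀ q ∈ fnodes ts, ∃ addr, fpos ts addr = some q := by
  cases ts with
  | nil => simp [fnodes]
  | cons t ts =>
    intro q hq
    simp only [fnodes, List.mem_append, List.mem_map] at hq
    rcases hq with h | ⟨p, hp, rfl⟩
    · obtain ⟨addr, haddr⟩ := exists_tpos_of_mem_tnodes t q h
      exact ⟨0 :: addr, by simpa [fpos] using haddr⟩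
    · obtain ⟨addr, haddr⟩ := exists_fpos_of_mem_fnodes ts p hp
      match addr, haddr with
      | [], haddr => simp [fpos_nil] at haddr
      | kk :: addr, haddr => exact ⟨(kk + 1) :: addr, by simp [fpos, haddr]⟩
end

theorem mem_fnodes_iff {ts : List (LTree α)} {q : ℕ × ℕ} :
    q ∈ fnodes ts ↔ ∃ addr, fpos ts addr = some q :=
  ⟨exists_fpos_of_mem_fnodes ts q, fun ⟨addr, h⟩ => mem_fnodes_of_fpos ts addr q h⟩

end Nodes

section Matching

variable {α : Type}

theorem close_unique {s : List (Bool × α)} {o c₁ c₂ : ℕ} {b₁ b₂ : α}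
    (h₁ : s[c₁]? = some (false, b₁)) (h₂ : s[c₂]? = some (false, b₂)) (ho₁ : o < c₁) (ho₂ : o < c₂)
    (hb₁ : IsBalanced (seg s (o + 1) c₁)) (hb₂ : IsBalanced (seg s (o + 1) c₂)) : c₁ = c₂ := by
  wlog hlt : c₁ < c₂ generalizing c₁ c₂ b₁ b₂
  · rcases lt_or_eq_of_le (not_lt.mp hlt) with h | h
    · exact (this h₂ h₁ ho₂ ho₁ hb₂ hb₁ h).symm
    · exact h.symm
  have := hb₂.2 (c₁ - o)
  rw [take_seg _ (by omega), show o + 1 + (c₁ - o) = c₁ + 1 by omega, seg_succ _ (by omega) h₁,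
    balance_append, hb₁.1] at this
  simp at this

theorem open_unique {s : List (Bool × α)} {o₁ o₂ c : ℕ} {a₁ a₂ : α}
    (h₁ : s[o₁]? = some (true, a₁)) (h₂ : s[o₂]? = some (true, a₂)) (ho₁ : o₁ < c) (ho₂ : o₂ < c)
    (hb₁ : IsBalanced (seg s (o₁ + 1) c)) (hb₂ : IsBalanced (seg s (o₂ + 1) c)) : o₁ = o₂ := by
  wlog hlt : o₁ < o₂ generalizing o₁ o₂ a₁ a₂
  · rcases lt_or_eq_of_le (not_lt.mp hlt) with h | h
    · exact (this h₂ h₁ ho₂ ho₁ hb₂ hb₁ h).symm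
    · exact h.symm
  have hpre := hb₁.2 (o₂ - o₁ - 1)
  have htot := hb₁.1
  rw [take_seg _ (by omega), show o₁ + 1 + (o₂ - o₁ - 1) = o₂ by omega] at hpre
  rw [← seg_append_seg s (show o₁ + 1 ≤ o₂ + 1 by omega) (by omega), seg_succ _ (by omega) h₂,
    balance_append, balance_append, hb₂.1] at htot
  simp at htot
  omega

theorem fnodes_eq {H : List (LTree α)} {q q' : ℕ × ℕ} (h : q ∈ fnodes H) (h' : q' ∈ fnodes H)
    (hq : q.1 = q'.1 ∨ q.2 = q'.2 ∨ q.1 = q'.2 ∨ q.2 = q'.1) : q = q' := by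
  obtain ⟨a, ho, hc⟩ := fnodes_getElem? H q h
  obtain ⟨a', ho', hc'⟩ := fnodes_getElem? H q' h'
  have hb := fnodes_bounds H q h
  have hb' := fnodes_bounds H q' h'
  have hi := isBalanced_fnodes_interior h
  have hi' := isBalanced_fnodes_interior h'
  rcases hq with hq | hq | hq | hq
  · rw [← hq] at ho' hi' hb'
    exact Prod.ext hq (close_unique hc hc' hb.1 hb'.1 hi hi')
  · rw [← hq] at hc' hi' hb'
    exact Prod.ext (open_unique ho ho' hb.1 hb'.1 hi hi') hq
  · rw [hq, hc'] at ho; simp at ho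
  · rw [hq, ho'] at hc; simp at hc

theorem mem_fnodes_of_isBalanced {H : List (LTree α)} {o c : ℕ} {a b : α} (hoc : o < c)
    (hc : c < (pforest H).length) (ho : (pforest H)[o]? = some (true, a))
    (hcl : (pforest H)[c]? = some (false, b)) (hbal : IsBalanced (seg (pforest H) (o + 1) c)) :
    (o, c) ∈ fnodes H := by
  obtain ⟨⟨o', c'⟩, hq, hor⟩ := exists_fnodes_of_lt H o (by omega)
  obtain ⟨a', ho', hc'⟩ := fnodes_getElem? H _ hq
  have hb := fnodes_bounds H _ hq
  rcases hor with rfl | rfl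
  · rwa [close_unique hcl hc' hoc hb.1 hbal (isBalanced_fnodes_interior hq)]
  · simp [hc'] at ho

theorem shift_mem_fnodes_of_factor {H ws : List (LTree α)} {A B : List (Bool × α)}
    (hdec : pforest H = A ++ pforest ws ++ B) {q : ℕ × ℕ} (hq : q ∈ fnodes ws) :
    (A.length + q.1, A.length + q.2) ∈ fnodes H := by
  obtain ⟨a, ho, hc⟩ := fnodes_getElem? ws q hq
  have hb := fnodes_bounds ws q hq
  apply mem_fnodes_of_isBalanced (a := a) (b := a) (by omega)
  · rw [hdec]; simp; omega
  · rw [hdec, getElem?_middle (hb.1.trans hb.2), ho]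
  · rw [hdec, getElem?_middle hb.2, hc]
  · rw [hdec, show A.length + q.1 + 1 = A.length + (q.1 + 1) by omega, seg_middle hb.2.le]
    exact isBalanced_fnodes_interior hq

theorem mem_factor_iff {H ws : List (LTree α)} {A B : List (Bool × α)}
    (hdec : pforest H = A ++ pforest ws ++ B) {o c : ℕ} (h : (o, c) ∈ fnodes H) :
    (A.length ≤ o ∧ o < A.length + (pforest ws).length) ↔
      (A.length ≤ c ∧ c < A.length + (pforest ws).length) := by
  have key : ∀ p, (p = o ∨ p = c) → A.length ≤ p → p < A.length + (pforest ws).length →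
      A.length ≤ o ∧ o < A.length + (pforest ws).length ∧
        A.length ≤ c ∧ c < A.length + (pforest ws).length := by
    intro p hp h1 h2
    obtain ⟨q, hq, hor⟩ := exists_fnodes_of_lt ws (p - A.length) (by omega)
    have hb := fnodes_bounds ws q hq
    have heq := fnodes_eq h (shift_mem_fnodes_of_factor hdec hq) (by simp only; omega)
    simp only [Prod.mk.injEq] at heq
    omega
  constructor
  · rintro ⟨h1, h2⟩; have := key o (Or.inl rfl) h1 h2; omega
  · rintro ⟨h1, h2⟩; have := key c (Or.inr rfl) h1 h2; omega

end Matching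

section Edits

variable {α : Type}

theorem FStep.symm {F G : List (LTree α)} (h : FStep F G) : FStep G F := by
  induction h with
  | relabel pre post ts a b => exact .relabel pre post ts b a
  | delete pre post ts a => exact .insert pre ts post a
  | insert pre mid post a => exact .delete pre post mid a
  | congr pre post ts ts' a _ ih => exact .congr pre post ts' ts a ih

theorem FStep.append_append {L R ts ts' : List (LTree α)} (h : FStep ts ts') :
    FStep (L ++ ts ++ R) (L ++ ts' ++ R) := by
  cases h with
  | relabel pre post us a b => simpa using FStep.relabel (L ++ pre) (post ++ R) us a b
  | delete pre post us a => simpa using FStep.delete (L ++ pre) (post ++ R) us a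
  | insert pre mid post a => simpa using FStep.insert (L ++ pre) mid (post ++ R) a
  | congr pre post us us' a hs => simpa using FStep.congr (L ++ pre) (post ++ R) us us' a hs

theorem FEdits.trans {m n : ℕ} {F G H : List (LTree α)} (h₁ : FEdits m F G) (h₂ : FEdits n G H) :
    FEdits (m + n) F H := by
  induction h₁ with
  | refl F => simpa using h₂
  | @step m' F' G' H' s _ ih => rw [Nat.add_right_comm]; exact .step s (ih h₂)

theorem FEdits.symm {n : ℕ} {F G : List (LTree α)} (h : FEdits n F G) : FEdits n G F := by
  induction h with
  | refl F => exact .refl F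
  | step s _ ih => exact ih.trans (.step s.symm (.refl _))

theorem FEdits.append_append {n : ℕ} {L R ts ts' : List (LTree α)} (h : FEdits n ts ts') :
    FEdits n (L ++ ts ++ R) (L ++ ts' ++ R) := by
  induction h with
  | refl F => exact .refl _
  | step s _ ih => exact .step s.append_append ih

theorem FEdits.append {m n : ℕ} {as as' bs bs' : List (LTree α)} (h₁ : FEdits m as as')
    (h₂ : FEdits n bs bs') : FEdits (m + n) (as ++ bs) (as' ++ bs') := by
  have h₁' : FEdits m (as ++ bs) (as' ++ bs) := by simpa using h₁.append_append (L := []) (R := bs)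
  exact h₁'.trans (by simpa using h₂.append_append (L := as') (R := []))

theorem FEdits.node {n : ℕ} {ts ts' : List (LTree α)} (a : α) (h : FEdits n ts ts') :
    FEdits n [.node a ts] [.node a ts'] := by
  induction h with
  | refl F => exact .refl _
  | step s _ ih => exact .step (by simpa using FStep.congr [] [] _ _ a s) ih

end Edits

section Injectivity

variable {α : Type}

theorem pstr_ne_nil (t : LTree α) : pstr t ≠ [] := by
  cases t; simp [pstr_node]

/-- Tree strings return to balance zero only at their end. -/
theorem pstr_append_inj {t t' : LTree α} {r r' : List (Bool × α)}
    (h : pstr t ++ r = pstr t' ++ r') : pstr t = pstr t' ∧ r = r' := by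
  refine List.append_inj h ?_
  by_contra hne
  wlog hlt : (pstr t).length < (pstr t').length generalizing t t' r r'
  · exact this h.symm (Ne.symm hne) (by omega)
  have htake : (pstr t').take (pstr t).length = pstr t := by
    rw [← List.take_append_of_le_length (l₂ := r') hlt.le, ← h, List.take_left']
    rfl
  have := one_le_balance_take_pstr t' hlt (List.length_pos_iff.mpr (pstr_ne_nil t))
  rw [htake, balance_pstr] at this
  omega

mutual
theorem pstr_injective : ∀ t t' : LTree α, pstr t = pstr t' → t = t'
  | .node a ts, .node a' ts', h => by
    rw [pstr_node, pstr_node] at h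
    injection h with h1 h2
    injection h1 with _ ha
    have hf := List.append_inj h2 (by simpa using congrArg List.length h2)
    rw [pforest_injective ts ts' hf.1, ha]
theorem pforest_injective : ∀ X Y : List (LTree α), pforest X = pforest Y → X = Y
  | [], [], _ => rfl
  | [], u :: _, h => absurd (List.append_eq_nil_iff.mp h.symm).1 (pstr_ne_nil u)
  | t :: _, [], h => absurd (List.append_eq_nil_iff.mp h).1 (pstr_ne_nil t)
  | t :: ts, u :: us, h => by
    obtain ⟨h1, h2⟩ := pstr_append_inj h
    rw [pstr_injective t u h1, pforest_injective ts us h2]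
end

end Injectivity

section Restriction

variable {α : Type}

mutual
/-- `K` selects nodes by the absolute position of their opening parenthesis, `off` being the
absolute position where the tree starts; the other nodes are deleted. -/
def trestrict (K : ℕ → Bool) : LTree α → ℕ → List (LTree α)
  | .node a ts, off =>
    if K off then [.node a (frestrict K ts (off + 1))] else frestrict K ts (off + 1)
def frestrict (K : ℕ → Bool) : List (LTree α) → ℕ → List (LTree α)
  | [], _ => []
  | t :: ts, off => trestrict K t off ++ frestrict K ts (off + (pstr t).length)
end

mutual
def tdeleted (K : ℕ → Bool) : LTree α → ℕ → ℕ
  | .node _ ts, off => (if K off then 0 else 1) + fdeleted K ts (off + 1)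
def fdeleted (K : ℕ → Bool) : List (LTree α) → ℕ → ℕ
  | [], _ => 0
  | t :: ts, off => tdeleted K t off + fdeleted K ts (off + (pstr t).length)
end

def keptChars (K : ℕ → Bool) (s : List (Bool × α)) (off : ℕ) : List (Bool × α) :=
  ((List.range s.length).filter (fun r => K (off + r))).filterMap (fun r => s[r]?)

mutual
theorem trestrict_edits (K : ℕ → Bool) (t : LTree α) (off : ℕ) :
    FEdits (tdeleted K t off) [t] (trestrict K t off) := by
  cases t with
  | node a ts =>
    rw [trestrict, tdeleted]
    by_cases hk : K off
    · simpa [hk] using (frestrict_edits K ts (off + 1)).node a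
    · simpa [hk, Nat.add_comm] using
        (FEdits.step (by simpa using FStep.delete [] [] ts a) (.refl _)).trans
          (frestrict_edits K ts (off + 1))
theorem frestrict_edits (K : ℕ → Bool) (ts : List (LTree α)) (off : ℕ) :
    FEdits (fdeleted K ts off) ts (frestrict K ts off) := by
  cases ts with
  | nil => exact .refl _
  | cons t ts =>
    rw [frestrict, fdeleted]
    simpa using (trestrict_edits K t off).append (frestrict_edits K ts (off + (pstr t).length))
end

mutual
theorem fsize_trestrict_add (K : ℕ → Bool) (t : LTree α) (off : ℕ) :
    fsize (trestrict K t off) + tdeleted K t off = tsize t := by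
  cases t with
  | node a ts =>
    have := fsize_frestrict_add K ts (off + 1)
    rw [trestrict, tdeleted]
    by_cases hk : K off <;> simp [hk, fsize, tsize] <;> omega
theorem fsize_frestrict_add (K : ℕ → Bool) (ts : List (LTree α)) (off : ℕ) :
    fsize (frestrict K ts off) + fdeleted K ts off = fsize ts := by
  cases ts with
  | nil => simp [frestrict, fdeleted, fsize]
  | cons t ts =>
    have h1 := fsize_trestrict_add K t off
    have h2 := fsize_frestrict_add K ts (off + (pstr t).length)
    rw [frestrict, fdeleted, fsize_append, fsize]
    omega
end

theorem keptChars_append (K : ℕ → Bool) (X Y : List (Bool × α)) (off : ℕ) :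
    keptChars K (X ++ Y) off = keptChars K X off ++ keptChars K Y (off + X.length) := by
  unfold keptChars
  rw [List.length_append, List.range_add, List.filter_append, List.filterMap_append,
    List.filter_map, List.filterMap_map]
  congr 1
  · refine List.filterMap_congr fun r hr => ?_
    simp only [List.mem_filter, List.mem_range] at hr
    rw [List.getElem?_append_left hr.1]
  · have hp : ((fun r => K (off + r)) ∘ fun x => X.length + x) =
        fun r => K (off + X.length + r) := by
      funext r; simp [Function.comp, Nat.add_assoc]
    rw [hp]
    refine List.filterMap_congr fun r hr => ?_
    simp [List.getElem?_append_right]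

theorem keptChars_singleton (K : ℕ → Bool) (ch : Bool × α) (off : ℕ) :
    keptChars K [ch] off = if K off then [ch] else [] := by
  by_cases hk : K off <;> simp [keptChars, hk, List.range_one]

theorem length_keptChars (K : ℕ → Bool) (s : List (Bool × α)) (off : ℕ) :
    (keptChars K s off).length = ((List.range s.length).filter (fun r => K (off + r))).length := by
  unfold keptChars
  rw [List.length_filterMap_eq_countP, List.countP_eq_length]
  intro r hr
  simp only [List.mem_filter, List.mem_range] at hr
  simp [hr.1]

def NodeClosed (K : ℕ → Bool) (pairs : List (ℕ × ℕ)) (off : ℕ) : Prop :=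
  ∀ q ∈ pairs, K (off + q.1) = K (off + q.2)

mutual
theorem pforest_trestrict (K : ℕ → Bool) (t : LTree α) (off : ℕ)
    (hcl : NodeClosed K (tnodes t) off) :
    pforest (trestrict K t off) = keptChars K (pstr t) off := by
  cases t with
  | node a ts =>
    have hroot : K off = K (off + 1 + (pforest ts).length) := by
      simpa [Nat.add_assoc, Nat.add_comm 1] using
        hcl (0, (pforest ts).length + 1) (by simp [tnodes])
    have hinner : NodeClosed K (fnodes ts) (off + 1) := fun q hq => by
      simpa [Nat.add_assoc, Nat.add_comm 1] using
        hcl (q.1 + 1, q.2 + 1) (List.mem_cons_of_mem _ (List.mem_map_of_mem hq))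
    rw [pstr_node, ← List.singleton_append, keptChars_append, keptChars_append,
      keptChars_singleton, keptChars_singleton, List.length_singleton, ← hroot,
      ← pforest_frestrict K ts (off + 1) hinner, trestrict]
    by_cases hk : K off <;> simp [hk, pforest, pstr_node]
theorem pforest_frestrict (K : ℕ → Bool) (ts : List (LTree α)) (off : ℕ)
    (hcl : NodeClosed K (fnodes ts) off) :
    pforest (frestrict K ts off) = keptChars K (pforest ts) off := by
  cases ts with
  | nil => simp [frestrict, pforest, keptChars]
  | cons t ts =>
    have hl : NodeClosed K (tnodes t) off := fun q hq => hcl q (by simp [fnodes, hq])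
    have hr : NodeClosed K (fnodes ts) (off + (pstr t).length) := fun q hq => by
      simpa [Nat.add_assoc, Nat.add_comm (pstr t).length] using
        hcl _ (List.mem_append_right _ (List.mem_map_of_mem (f := fun q : ℕ × ℕ =>
          (q.1 + (pstr t).length, q.2 + (pstr t).length)) hq))
    rw [frestrict, pforest_append, pforest, keptChars_append, pforest_trestrict K t off hl,
      pforest_frestrict K ts _ hr]
end

theorem two_mul_fdeleted (K : ℕ → Bool) (ts : List (LTree α)) (off : ℕ)
    (hcl : NodeClosed K (fnodes ts) off) :
    2 * fdeleted K ts off =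
      ((List.range (pforest ts).length).filter (fun r => !K (off + r))).length := by
  have h1 := fsize_frestrict_add K ts off
  have h2 := congrArg List.length (pforest_frestrict K ts off hcl)
  have h3 : (pforest ts).length =
      ((List.range (pforest ts).length).filter (fun r => K (off + r))).length +
        ((List.range (pforest ts).length).filter (fun r => !K (off + r))).length := by
    have := List.length_eq_length_filter_add (l := List.range (pforest ts).length)
      (fun r => K (off + r))
    rwa [List.length_range] at this
  rw [length_keptChars] at h2
  have := length_pforest ts
  have := length_pforest (frestrict K ts off)
  omega

end Restriction

section Alignment

variable {α : Type}

theorem IsMatching.pairwise {M : List (ℕ × ℕ)} (hM : IsMatching M) :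
    M.Pairwise (fun p q => p.1 < q.1 ∧ p.2 < q.2) :=
  let R : ℕ × ℕ → ℕ × ℕ → Prop := fun p q => p.1 < q.1 ∧ p.2 < q.2
  have : Trans R R R := ⟨fun h h' => ⟨h.1.trans h'.1, h.2.trans h'.2⟩⟩
  List.isChain_iff_pairwise.mp hM

theorem IsMatching.eq_of_fst_eq {M : List (ℕ × ℕ)} (hM : IsMatching M) {p q : ℕ × ℕ}
    (hp : p ∈ M) (hq : q ∈ M) (h : p.1 = q.1) : p = q := by
  by_contra hne
  have hsymm : M.Pairwise (fun p q => (p.1 < q.1 ∧ p.2 < q.2) ∨ (q.1 < p.1 ∧ q.2 < p.2)) :=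
    hM.pairwise.imp Or.inl
  have : Std.Symm (fun p q : ℕ × ℕ => (p.1 < q.1 ∧ p.2 < q.2) ∨ (q.1 < p.1 ∧ q.2 < p.2)) :=
    ⟨fun _ _ h => h.symm⟩
  have := hsymm.forall hp hq hne
  omega

theorem filter_range_mem_eq {l : List ℕ} {n : ℕ} (hl : l.Pairwise (· < ·))
    (hn : ∀ x ∈ l, x < n) :
    (List.range n).filter (fun r => decide (r ∈ l)) = l :=
  ((List.pairwise_lt_range).sublist List.filter_sublist).eq_of_mem_iff hl fun x => by
    simpa using fun h => hn x h

theorem TreeAligned.exists_image {F G : List (LTree α)} {M : List (ℕ × ℕ)}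
    (hM : TreeAligned F G M) {u : ℕ × ℕ} (hu : u ∈ fnodes F) {p : ℕ × ℕ} (hp : p ∈ M)
    (hpu : p.1 = u.1 ∨ p.1 = u.2) :
    ∃ v ∈ fnodes G, (u.1, v.1) ∈ M ∧ (u.2, v.2) ∈ M := by
  obtain ⟨addr, haddr⟩ := mem_fnodes_iff.mp hu
  rcases hM.2.2 addr u.1 u.2 haddr with hdel | ⟨b, ov, cv, hb, ho, hc⟩
  · have := hdel p hp; omega
  · exact ⟨(ov, cv), mem_fnodes_iff.mpr ⟨b, hb⟩, ho, hc⟩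

theorem TreeAligned.nodeClosed_fst {F G : List (LTree α)} {M : List (ℕ × ℕ)}
    (hM : TreeAligned F G M) :
    NodeClosed (fun r => decide (r ∈ M.map Prod.fst)) (fnodes F) 0 := by
  intro u hu
  simp only [zero_add, decide_eq_decide, List.mem_map]
  constructor <;> rintro ⟨p, hp, hpu⟩
  · obtain ⟨v, -, -, hc⟩ := hM.exists_image hu hp (Or.inl hpu)
    exact ⟨_, hc, rfl⟩
  · obtain ⟨v, -, ho, -⟩ := hM.exists_image hu hp (Or.inr hpu)
    exact ⟨_, ho, rfl⟩

theorem TreeAligned.nodeClosed_snd {F G : List (LTree α)} {M : List (ℕ × ℕ)}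
    (hM : TreeAligned F G M) :
    NodeClosed (fun r => decide (r ∈ M.map Prod.snd)) (fnodes G) 0 := by
  have key : ∀ v ∈ fnodes G, ∀ p ∈ M, (p.2 = v.1 ∨ p.2 = v.2) →
      v.1 ∈ M.map Prod.snd ∧ v.2 ∈ M.map Prod.snd := by
    intro v hv p hp hpv
    obtain ⟨u, hu, hor⟩ := exists_fnodes_of_lt F p.1 (hM.2.1 p hp).1
    obtain ⟨v', hv', ho, hc⟩ := hM.exists_image hu hp hor
    have hvv' : v = v' := by
      rcases hor with h | h
      · have := hM.1.eq_of_fst_eq hp ho h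
        exact fnodes_eq hv hv' (by subst this; omega)
      · have := hM.1.eq_of_fst_eq hp hc h
        exact fnodes_eq hv hv' (by subst this; omega)
    subst hvv'
    exact ⟨List.mem_map.mpr ⟨_, ho, rfl⟩, List.mem_map.mpr ⟨_, hc, rfl⟩⟩
  intro v hv
  simp only [zero_add, decide_eq_decide]
  constructor <;> intro h <;> obtain ⟨p, hp, hpv⟩ := List.mem_map.mp h
  · exact (key v hv p hp (Or.inl hpv)).2
  · exact (key v hv p hp (Or.inr hpv)).1

/-- Deleting the unaligned nodes of `F` and of `G` leaves the same forest. -/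
theorem two_mul_ted_le {F G : List (LTree α)} {M : List (ℕ × ℕ)} (hM : TreeAligned F G M)
    (hexact : ∀ q ∈ M, (pforest F)[q.1]? = (pforest G)[q.2]?) :
    2 * ted F G ≤ ((pforest F).length - M.length) + ((pforest G).length - M.length) := by
  set KF : ℕ → Bool := fun r => decide (r ∈ M.map Prod.fst)
  set KG : ℕ → Bool := fun r => decide (r ∈ M.map Prod.snd)
  have hclF := hM.nodeClosed_fst
  have hclG := hM.nodeClosed_snd
  have hkeptF :
      (List.range (pforest F).length).filter (fun r => KF (0 + r)) = M.map Prod.fst := by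
    simpa [KF] using filter_range_mem_eq (List.pairwise_map.mpr (hM.1.pairwise.imp And.left))
      (by simpa using fun a b h => (hM.2.1 (a, b) h).1)
  have hkeptG :
      (List.range (pforest G).length).filter (fun r => KG (0 + r)) = M.map Prod.snd := by
    simpa [KG] using filter_range_mem_eq (List.pairwise_map.mpr (hM.1.pairwise.imp And.right))
      (by simpa using fun b a h => (hM.2.1 (a, b) h).2)
  have hsame : frestrict KF F 0 = frestrict KG G 0 := by
    refine pforest_injective _ _ ?_
    rw [pforest_frestrict KF F 0 hclF, pforest_frestrict KG G 0 hclG, keptChars, keptChars,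
      hkeptF, hkeptG, List.filterMap_map, List.filterMap_map]
    exact List.filterMap_congr fun q hq => hexact q hq
  have hedits : FEdits (fdeleted KF F 0 + fdeleted KG G 0) F G :=
    (frestrict_edits KF F 0).trans (hsame ▸ (frestrict_edits KG G 0).symm)
  have hcountF := List.length_eq_length_filter_add (l := List.range (pforest F).length)
    (fun r => KF (0 + r))
  have hcountG := List.length_eq_length_filter_add (l := List.range (pforest G).length)
    (fun r => KG (0 + r))
  rw [hkeptF, List.length_map, List.length_range] at hcountF
  rw [hkeptG, List.length_map, List.length_range] at hcountG
  have hF := two_mul_fdeleted KF F 0 hclF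
  have hG := two_mul_fdeleted KG G 0 hclG
  have := Nat.sInf_le (s := {n | FEdits n F G}) hedits
  rw [← ted] at this
  omega

theorem alignCost_of_exact [DecidableEq α] {s t : List (Bool × α)} (d : Bool × α)
    {M : List (ℕ × ℕ)} (hexact : ∀ q ∈ M, s[q.1]? = t[q.2]?) :
    alignCost s t d M = (s.length - M.length) + (t.length - M.length) := by
  rw [alignCost, List.countP_eq_zero.mpr, Nat.add_zero]
  intro q hq
  simp [List.getD_eq_getElem?_getD, hexact q hq]

end Alignment

section ExactMatches

variable {α : Type}

theorem shift_mem_fnodes_of_seg_eq {F G : List (LTree α)} {lo hi sh : ℕ}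
    (hseq : seg (pforest F) lo hi = seg (pforest G) sh (sh + (hi - lo)))
    (hG : sh + (hi - lo) ≤ (pforest G).length) {o c : ℕ} (hu : (o, c) ∈ fnodes F)
    (hlo : lo ≤ o) (hc : c < hi) : (o - lo + sh, c - lo + sh) ∈ fnodes G := by
  obtain ⟨a, ho, hcl⟩ := fnodes_getElem? F _ hu
  have hb := fnodes_bounds F _ hu
  have hint := seg_eq_seg_of_seg_eq hseq (show lo ≤ o + 1 by omega) hb.1 hc.le
  rw [show o + 1 - lo + sh = o - lo + sh + 1 by omega] at hint
  apply mem_fnodes_of_isBalanced (a := a) (b := a) (by omega) (by omega)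
  · rw [getElem?_eq_of_seg_eq hseq hlo (by omega)]; exact ho
  · rw [getElem?_eq_of_seg_eq hseq (by omega) hc]; exact hcl
  · rw [← hint]; exact isBalanced_fnodes_interior hu

/-- The interior of the node differs from that of its image only in the balanced forest filling
the hole of the context. -/
theorem shift_mem_fnodes_of_context {F G : List (LTree α)} {i₁ j₁ i₂ j₂ s₁ s₂ : ℕ}
    (hseq₁ : seg (pforest F) i₁ j₁ = seg (pforest G) s₁ (s₁ + (j₁ - i₁)))
    (hseq₂ : seg (pforest F) i₂ j₂ = seg (pforest G) s₂ (s₂ + (j₂ - i₂)))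
    (hholeF : ∃ ws : List (LTree α), seg (pforest F) j₁ i₂ = pforest ws)
    (hholeG : ∃ ws : List (LTree α), seg (pforest G) (s₁ + (j₁ - i₁)) s₂ = pforest ws)
    (hj : j₁ ≤ i₂) (hs : s₁ + (j₁ - i₁) ≤ s₂) (hG : s₂ + (j₂ - i₂) ≤ (pforest G).length)
    {o c : ℕ} (hu : (o, c) ∈ fnodes F) (ho : i₁ ≤ o ∧ o < j₁) (hc : i₂ ≤ c ∧ c < j₂) :
    (o - i₁ + s₁, c - i₂ + s₂) ∈ fnodes G := by
  obtain ⟨a, hop, hcl⟩ := fnodes_getElem? F _ hu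
  obtain ⟨ws, hws⟩ := hholeF
  obtain ⟨ws', hws'⟩ := hholeG
  have hX := seg_eq_seg_of_seg_eq hseq₁ (show i₁ ≤ o + 1 by omega) (show o + 1 ≤ j₁ by omega) le_rfl
  have hY := seg_eq_seg_of_seg_eq hseq₂ le_rfl hc.1 hc.2.le
  rw [show o + 1 - i₁ + s₁ = o - i₁ + s₁ + 1 by omega,
    show j₁ - i₁ + s₁ = s₁ + (j₁ - i₁) by omega] at hX
  rw [Nat.sub_self, Nat.zero_add] at hY
  have hF : seg (pforest F) (o + 1) c =
      seg (pforest F) (o + 1) j₁ ++ pforest ws ++ seg (pforest F) i₂ c := by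
    rw [← hws, seg_append_seg _ (by omega) hj, seg_append_seg _ (by omega) hc.1]
  have hG' : seg (pforest G) (o - i₁ + s₁ + 1) (c - i₂ + s₂) =
      seg (pforest F) (o + 1) j₁ ++ pforest ws' ++ seg (pforest F) i₂ c := by
    rw [hX, hY, ← hws', seg_append_seg _ (by omega) hs, seg_append_seg _ (by omega) (by omega)]
  apply mem_fnodes_of_isBalanced (a := a) (b := a) (by omega) (by omega)
  · rw [getElem?_eq_of_seg_eq hseq₁ ho.1 ho.2]; exact hop
  · rw [getElem?_eq_of_seg_eq hseq₂ hc.1 hc.2]; exact hcl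
  · rw [hG']
    exact (hF ▸ isBalanced_fnodes_interior hu).replace_middle (isBalanced_pforest ws)
      (isBalanced_pforest ws')

end ExactMatches

section Pieces

variable {α : Type}

def InCore (k : ℕ) : Piece → ℕ → Prop
  | .fpiece i j, x => i + 2 * k ≤ x ∧ x + 2 * k < j
  | .cpiece i₁ j₁ i₂ j₂, x =>
      (i₁ + 2 * k ≤ x ∧ x + 2 * k < j₁) ∨ (i₂ + 2 * k ≤ x ∧ x + 2 * k < j₂)

theorem InCore.covers {k : ℕ} {π : Piece} {x : ℕ} (h : InCore k π x) : Covers π x := by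
  cases π <;> simp only [InCore, Covers] at h ⊢ <;> omega

open Classical in
/-- Position of `p` in a chosen exact occurrence of the piece in `str(G)` (`p` itself for
unmatched pieces). -/
noncomputable def pieceImage (F G : List (LTree α)) (k : ℕ) : Piece → ℕ → ℕ
  | .fpiece i j, p => if h : MatchedPiece F G k (.fpiece i j) then p - i + h.choose else p
  | .cpiece i₁ j₁ i₂ j₂, p =>
      if h : MatchedPiece F G k (.cpiece i₁ j₁ i₂ j₂) then
        if p < j₁ then p - i₁ + h.choose else p - i₂ + h.choose_spec.choose
      else p

theorem MatchedPiece.fpiece_spec {F G : List (LTree α)} {k i j : ℕ}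
    (hm : MatchedPiece F G k (.fpiece i j)) :
    ∃ s, Near k i s ∧ s + (j - i) ≤ (pforest G).length ∧
      seg (pforest F) i j = seg (pforest G) s (s + (j - i)) ∧
      ∀ y, pieceImage F G k (.fpiece i j) y = y - i + s :=
  ⟨hm.choose, hm.choose_spec.1, hm.choose_spec.2.1, hm.choose_spec.2.2,
    fun y => by simp [pieceImage, hm]⟩

theorem MatchedPiece.cpiece_spec {F G : List (LTree α)} {k i₁ j₁ i₂ j₂ : ℕ}
    (hm : MatchedPiece F G k (.cpiece i₁ j₁ i₂ j₂)) (hv : ValidPiece F (.cpiece i₁ j₁ i₂ j₂)) :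
    ∃ s₁ s₂, Near k i₁ s₁ ∧ Near k i₂ s₂ ∧ s₁ + (j₁ - i₁) < s₂ ∧
      s₂ + (j₂ - i₂) ≤ (pforest G).length ∧
      seg (pforest F) i₁ j₁ = seg (pforest G) s₁ (s₁ + (j₁ - i₁)) ∧
      seg (pforest F) i₂ j₂ = seg (pforest G) s₂ (s₂ + (j₂ - i₂)) ∧
      (∃ ws : List (LTree α), seg (pforest G) (s₁ + (j₁ - i₁)) s₂ = pforest ws) ∧
      (∀ y, y < j₁ → pieceImage F G k (.cpiece i₁ j₁ i₂ j₂) y = y - i₁ + s₁) ∧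
      (∀ y, i₂ ≤ y → pieceImage F G k (.cpiece i₁ j₁ i₂ j₂) y = y - i₂ + s₂) := by
  obtain ⟨h1, h2, h3, h4, h5, h6, -, h8⟩ := hm.choose_spec.choose_spec
  refine ⟨_, _, h1, h2, h3, h4, h5, h6, h8, fun y hy => ?_, fun y hy => ?_⟩
  · simp [pieceImage, hm, hy]
  · have : ¬ y < j₁ := by simp only [ValidPiece] at hv; omega
    simp [pieceImage, hm, this]

theorem MatchedPiece.exists_block {F G : List (LTree α)} {k : ℕ} {π : Piece}
    (hm : MatchedPiece F G k π) (hv : ValidPiece F π) {x : ℕ} (hx : InCore k π x) :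
    ∃ lo hi sh, lo + 2 * k ≤ x ∧ x + 2 * k < hi ∧ Near k lo sh ∧
      sh + (hi - lo) ≤ (pforest G).length ∧
      seg (pforest F) lo hi = seg (pforest G) sh (sh + (hi - lo)) ∧
      ∀ y, lo ≤ y → y < hi → Covers π y ∧ pieceImage F G k π y = y - lo + sh := by
  cases π with
  | fpiece i j =>
    obtain ⟨s, hn, hG, hseq, himg⟩ := hm.fpiece_spec
    exact ⟨i, j, s, hx.1, hx.2, hn, hG, hseq, fun y h1 h2 => ⟨⟨h1, h2⟩, himg y⟩⟩
  | cpiece i₁ j₁ i₂ j₂ =>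
    obtain ⟨s₁, s₂, hn₁, hn₂, hs, hG, hseq₁, hseq₂, -, himg₁, himg₂⟩ := hm.cpiece_spec hv
    rcases hx with hx | hx
    · exact ⟨i₁, j₁, s₁, hx.1, hx.2, hn₁, by omega, hseq₁,
        fun y h1 h2 => ⟨Or.inl ⟨h1, h2⟩, himg₁ y h2⟩⟩
    · exact ⟨i₂, j₂, s₂, hx.1, hx.2, hn₂, hG, hseq₂,
        fun y h1 h2 => ⟨Or.inr ⟨h1, h2⟩, himg₂ y h1⟩⟩

theorem MatchedPiece.image_mem_fnodes {F G : List (LTree α)} {k : ℕ} {π : Piece}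
    (hm : MatchedPiece F G k π) (hv : ValidPiece F π) {o c : ℕ} (hu : (o, c) ∈ fnodes F)
    (ho : InCore k π o) (hc : InCore k π c) :
    (pieceImage F G k π o, pieceImage F G k π c) ∈ fnodes G := by
  have hoc := (fnodes_bounds F _ hu).1
  cases π with
  | fpiece i j =>
    obtain ⟨s, -, hG, hseq, himg⟩ := hm.fpiece_spec
    rw [himg, himg]
    exact shift_mem_fnodes_of_seg_eq hseq hG hu (by simp only [InCore] at ho; omega)
      (by simp only [InCore] at hc; omega)
  | cpiece i₁ j₁ i₂ j₂ =>
    obtain ⟨s₁, s₂, -, -, hs, hG, hseq₁, hseq₂, hholeG, himg₁, himg₂⟩ := hm.cpiece_spec hv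
    obtain ⟨-, hj, -, -, -, hholeF⟩ := hv
    simp only [InCore] at ho hc
    rcases ho with ho | ho <;> rcases hc with hc | hc
    · rw [himg₁ _ (by omega), himg₁ _ (by omega)]
      exact shift_mem_fnodes_of_seg_eq hseq₁ (by omega) hu (by omega) (by omega)
    · rw [himg₁ _ (by omega), himg₂ _ (by omega)]
      exact shift_mem_fnodes_of_context hseq₁ hseq₂ hholeF hholeG hj.le hs.le hG hu
        (by omega) (by omega)
    · omega
    · rw [himg₂ _ (by omega), himg₂ _ (by omega)]
      exact shift_mem_fnodes_of_seg_eq hseq₂ hG hu (by omega) (by omega)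

theorem ValidPiece.covers_iff {F : List (LTree α)} {π : Piece} (hv : ValidPiece F π)
    {o c : ℕ} (hu : (o, c) ∈ fnodes F) : Covers π o ↔ Covers π c := by
  have hb := fnodes_bounds F _ hu
  cases π with
  | fpiece i j =>
    obtain ⟨hij, hj, ws, hws⟩ := hv
    have hdec := (take_append_seg_append_drop (pforest F) hij).symm
    rw [hws] at hdec
    have hlen : (pforest ws).length = j - i := by rw [← hws, length_seg]; omega
    have := mem_factor_iff hdec hu
    simp only [Covers, List.length_take, hlen] at this ⊢
    omega
  | cpiece i₁ j₁ i₂ j₂ =>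
    obtain ⟨h1, h2, h3, h4, ⟨t, ht⟩, ⟨ws, hws⟩⟩ := hv
    have hdec₁ := (take_append_seg_append_drop (pforest F) (show i₁ ≤ j₂ by omega)).symm
    have hdec₂ := (take_append_seg_append_drop (pforest F) h2.le).symm
    rw [ht, ← pforest_singleton] at hdec₁
    rw [hws] at hdec₂
    have hlen₁ : (pforest [t]).length = j₂ - i₁ := by
      rw [pforest_singleton, ← ht, length_seg]; omega
    have hlen₂ : (pforest ws).length = i₂ - j₁ := by rw [← hws, length_seg]; omega
    have h₁ := mem_factor_iff hdec₁ hu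
    have h₂ := mem_factor_iff hdec₂ hu
    simp only [Covers, List.length_take, hlen₁, hlen₂] at h₁ h₂ ⊢
    omega

end Pieces

section KeptAlignment

variable {α : Type}

def PiecesDisjoint (pieces : List Piece) : Prop :=
  pieces.Pairwise fun π₁ π₂ => ∀ p, ¬(Covers π₁ p ∧ Covers π₂ p)

open Classical in
noncomputable def coveringPiece (pieces : List Piece) (p : ℕ) : Piece :=
  if h : ∃ π ∈ pieces, Covers π p then h.choose else .fpiece 0 0

theorem PiecesDisjoint.coveringPiece_eq {pieces : List Piece} (hdisj : PiecesDisjoint pieces)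
    {π : Piece} (hπ : π ∈ pieces) {p : ℕ} (hp : Covers π p) : coveringPiece pieces p = π := by
  have hex : ∃ π ∈ pieces, Covers π p := ⟨π, hπ, hp⟩
  rw [coveringPiece, dif_pos hex]
  obtain ⟨hmem, hcov⟩ := hex.choose_spec
  by_contra hne
  have : Std.Symm fun π₁ π₂ : Piece => ∀ p, ¬(Covers π₁ p ∧ Covers π₂ p) :=
    ⟨fun _ _ h p hp => h p hp.symm⟩
  exact hdisj.forall hmem hπ hne p ⟨hcov, hp⟩

noncomputable def alignImage (F G : List (LTree α)) (k : ℕ) (pieces : List Piece) (p : ℕ) : ℕ :=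
  pieceImage F G k (coveringPiece pieces p) p

def KeptNode (F G : List (LTree α)) (k : ℕ) (pieces : List Piece) (u : ℕ × ℕ) : Prop :=
  u ∈ fnodes F ∧ ∃ π ∈ pieces, MatchedPiece F G k π ∧ InCore k π u.1 ∧ InCore k π u.2

def Kept (F G : List (LTree α)) (k : ℕ) (pieces : List Piece) (p : ℕ) : Prop :=
  ∃ u, KeptNode F G k pieces u ∧ (p = u.1 ∨ p = u.2)

variable {F G : List (LTree α)} {k : ℕ} {pieces : List Piece}

theorem Kept.lt_length {p : ℕ} (hp : Kept F G k pieces p) : p < (pforest F).length := by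
  obtain ⟨u, ⟨hu, -⟩, hpu⟩ := hp
  have := fnodes_bounds F u hu
  omega

theorem keptNode_of_kept {u : ℕ × ℕ} (hu : u ∈ fnodes F)
    (h : Kept F G k pieces u.1 ∨ Kept F G k pieces u.2) : KeptNode F G k pieces u := by
  obtain ⟨v, hv, hpv⟩ : ∃ v, KeptNode F G k pieces v ∧
      (u.1 = v.1 ∨ u.1 = v.2 ∨ u.2 = v.1 ∨ u.2 = v.2) := by
    rcases h with ⟨v, hv, h⟩ | ⟨v, hv, h⟩ <;> exact ⟨v, hv, by omega⟩
  rwa [fnodes_eq hu hv.1 (by omega)]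

theorem Kept.exists_block (hval : ∀ π ∈ pieces, ValidPiece F π) (hdisj : PiecesDisjoint pieces)
    {p : ℕ} (hp : Kept F G k pieces p) :
    ∃ lo hi sh, lo + 2 * k ≤ p ∧ p + 2 * k < hi ∧ Near k lo sh ∧
      sh + (hi - lo) ≤ (pforest G).length ∧
      seg (pforest F) lo hi = seg (pforest G) sh (sh + (hi - lo)) ∧
      ∀ y, lo ≤ y → y < hi → alignImage F G k pieces y = y - lo + sh := by
  obtain ⟨⟨o, c⟩, ⟨-, π, hπ, hm, ho, hc⟩, hpu⟩ := hp
  obtain ⟨lo, hi, sh, h1, h2, h3, h4, h5, himg⟩ :=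
    hm.exists_block (hval π hπ) (show InCore k π p by rcases hpu with rfl | rfl <;> assumption)
  refine ⟨lo, hi, sh, h1, h2, h3, h4, h5, fun y hy₁ hy₂ => ?_⟩
  obtain ⟨hcov, hy⟩ := himg y hy₁ hy₂
  rw [alignImage, hdisj.coveringPiece_eq hπ hcov, hy]

theorem Kept.getElem?_alignImage (hval : ∀ π ∈ pieces, ValidPiece F π)
    (hdisj : PiecesDisjoint pieces) {p : ℕ} (hp : Kept F G k pieces p) :
    (pforest G)[alignImage F G k pieces p]? = (pforest F)[p]? := by
  obtain ⟨lo, hi, sh, h1, h2, -, -, hseq, himg⟩ := hp.exists_block hval hdisj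
  rw [himg p (by omega) (by omega)]
  exact getElem?_eq_of_seg_eq hseq (by omega) (by omega)

theorem Kept.alignImage_lt_length (hval : ∀ π ∈ pieces, ValidPiece F π)
    (hdisj : PiecesDisjoint pieces) {p : ℕ} (hp : Kept F G k pieces p) :
    alignImage F G k pieces p < (pforest G).length := by
  obtain ⟨lo, hi, sh, h1, h2, -, hG, -, himg⟩ := hp.exists_block hval hdisj
  rw [himg p (by omega) (by omega)]
  omega

/-- Within one block the alignment is a shift; positions in different blocks are more than `2k`
apart while each moves by at most `k`. -/
theorem Kept.alignImage_lt (hval : ∀ π ∈ pieces, ValidPiece F π)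
    (hdisj : PiecesDisjoint pieces) {p q : ℕ} (hp : Kept F G k pieces p)
    (hq : Kept F G k pieces q) (hpq : p < q) :
    alignImage F G k pieces p < alignImage F G k pieces q := by
  obtain ⟨lo, hi, sh, h1, h2, ⟨-, h3⟩, -, -, himg⟩ := hp.exists_block hval hdisj
  obtain ⟨lo', hi', sh', h1', h2', ⟨h3', -⟩, -, -, himg'⟩ := hq.exists_block hval hdisj
  rw [himg p (by omega) (by omega), himg' q (by omega) (by omega)]
  by_cases hqhi : q < hi
  · have := himg q (by omega) hqhi
    rw [himg' q (by omega) (by omega)] at this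
    omega
  · omega

theorem KeptNode.alignImage_mem_fnodes (hval : ∀ π ∈ pieces, ValidPiece F π)
    (hdisj : PiecesDisjoint pieces) {u : ℕ × ℕ} (hu : KeptNode F G k pieces u) :
    (alignImage F G k pieces u.1, alignImage F G k pieces u.2) ∈ fnodes G := by
  obtain ⟨hmem, π, hπ, hm, ho, hc⟩ := hu
  rw [alignImage, alignImage, hdisj.coveringPiece_eq hπ ho.covers,
    hdisj.coveringPiece_eq hπ hc.covers]
  exact hm.image_mem_fnodes (hval π hπ) hmem ho hc

open Classical in
noncomputable def keptMatching (F G : List (LTree α)) (k : ℕ) (pieces : List Piece) :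
    List (ℕ × ℕ) :=
  ((List.range (pforest F).length).filter (Kept F G k pieces ·)).map
    fun p => (p, alignImage F G k pieces p)

theorem mem_keptMatching {q : ℕ × ℕ} :
    q ∈ keptMatching F G k pieces ↔
      Kept F G k pieces q.1 ∧ q.2 = alignImage F G k pieces q.1 := by
  classical
  simp only [keptMatching, List.mem_map, List.mem_filter, List.mem_range, decide_eq_true_eq]
  constructor
  · rintro ⟨p, ⟨-, hp⟩, rfl⟩
    exact ⟨hp, rfl⟩
  · rintro ⟨hp, h⟩
    exact ⟨q.1, ⟨hp.lt_length, hp⟩, Prod.ext rfl h.symm⟩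

theorem keptMatching_exact (hval : ∀ π ∈ pieces, ValidPiece F π) (hdisj : PiecesDisjoint pieces) :
    ∀ q ∈ keptMatching F G k pieces, (pforest F)[q.1]? = (pforest G)[q.2]? := by
  intro q hq
  obtain ⟨hp, h⟩ := mem_keptMatching.mp hq
  rw [h, hp.getElem?_alignImage hval hdisj]

theorem keptMatching_treeAligned (hval : ∀ π ∈ pieces, ValidPiece F π)
    (hdisj : PiecesDisjoint pieces) : TreeAligned F G (keptMatching F G k pieces) := by
  classical
  refine ⟨?_, fun q hq => ?_, fun addr o c hpos => ?_⟩
  · have hsorted := (List.pairwise_lt_range (n := (pforest F).length)).sublist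
      (List.filter_sublist (p := (Kept F G k pieces ·)))
    refine List.Pairwise.isChain (List.pairwise_map.mpr (hsorted.imp_of_mem fun ha hb hab => ?_))
    simp only [List.mem_filter, decide_eq_true_eq] at ha hb
    exact ⟨hab, ha.2.alignImage_lt hval hdisj hb.2 hab⟩
  · obtain ⟨hp, h⟩ := mem_keptMatching.mp hq
    exact ⟨hp.lt_length, h ▸ hp.alignImage_lt_length hval hdisj⟩
  · have hu := mem_fnodes_of_fpos F addr _ hpos
    by_cases hkept : KeptNode F G k pieces (o, c)
    · obtain ⟨b, hb⟩ := mem_fnodes_iff.mp (hkept.alignImage_mem_fnodes hval hdisj)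
      refine Or.inr ⟨b, _, _, hb, mem_keptMatching.mpr ⟨⟨_, hkept, Or.inl rfl⟩, rfl⟩,
        mem_keptMatching.mpr ⟨⟨_, hkept, Or.inr rfl⟩, rfl⟩⟩
    · refine Or.inl fun q hq => ?_
      have hp := (mem_keptMatching.mp hq).1
      constructor <;> rintro rfl
      · exact hkept (keptNode_of_kept hu (Or.inl hp))
      · exact hkept (keptNode_of_kept hu (Or.inr hp))

end KeptAlignment

section Counting

variable {α : Type}

open Classical in
noncomputable def mate (F : List (LTree α)) (p : ℕ) : ℕ :=
  if h : ∃ u ∈ fnodes F, p = u.1 ∨ p = u.2 then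
    if p = h.choose.1 then h.choose.2 else h.choose.1
  else p

theorem mate_of_mem_fnodes {F : List (LTree α)} {u : ℕ × ℕ} (hu : u ∈ fnodes F) :
    mate F u.1 = u.2 ∧ mate F u.2 = u.1 := by
  have hb := fnodes_bounds F u hu
  have key : ∀ p (h : ∃ v ∈ fnodes F, p = v.1 ∨ p = v.2), (p = u.1 ∨ p = u.2) → h.choose = u :=
    fun p h hpu => fnodes_eq h.choose_spec.1 hu (by have := h.choose_spec.2; omega)
  have h₁ : ∃ v ∈ fnodes F, u.1 = v.1 ∨ u.1 = v.2 := ⟨u, hu, Or.inl rfl⟩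
  have h₂ : ∃ v ∈ fnodes F, u.2 = v.1 ∨ u.2 = v.2 := ⟨u, hu, Or.inr rfl⟩
  constructor
  · rw [mate, dif_pos h₁, key _ h₁ (Or.inl rfl), if_pos rfl]
  · rw [mate, dif_pos h₂, key _ h₂ (Or.inr rfl), if_neg (by omega)]

open Classical in
theorem card_filter_covers_le_psize (π : Piece) (n : ℕ) :
    ((Finset.range n).filter (Covers π ·)).card ≤ psize π := by
  cases π with
  | fpiece i j =>
    calc _ ≤ (Finset.Ico i j).card := Finset.card_le_card (by
            intro x hx
            rw [Finset.mem_filter] at hx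
            simpa [Covers] using hx.2)
      _ = psize (.fpiece i j) := Nat.card_Ico i j
  | cpiece i₁ j₁ i₂ j₂ =>
    calc _ ≤ (Finset.Ico i₁ j₁ ∪ Finset.Ico i₂ j₂).card := Finset.card_le_card (by
            intro x hx
            rw [Finset.mem_filter] at hx
            simpa [Covers] using hx.2)
      _ ≤ (Finset.Ico i₁ j₁).card + (Finset.Ico i₂ j₂).card := Finset.card_union_le _ _
      _ = psize (.cpiece i₁ j₁ i₂ j₂) := by simp [psize]

open Classical in
theorem card_filter_covers_not_inCore_le (π : Piece) (n k : ℕ) :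
    ((Finset.range n).filter (fun x => Covers π x ∧ ¬ InCore k π x)).card ≤ 8 * k := by
  have hends : ∀ i j : ℕ, (Finset.Ico i (i + 2 * k) ∪ Finset.Ico (j - 2 * k) j).card ≤ 4 * k :=
    fun i j => (Finset.card_union_le _ _).trans (by simp; omega)
  cases π with
  | fpiece i j =>
    refine le_trans (Finset.card_le_card ?_) ((hends i j).trans (by omega))
    intro x hx
    rw [Finset.mem_filter] at hx
    simp only [Covers, InCore, Finset.mem_union, Finset.mem_Ico] at hx ⊢
    omega
  | cpiece i₁ j₁ i₂ j₂ =>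
    refine le_trans (Finset.card_le_card ?_) ((Finset.card_union_le _ _).trans
      (Nat.add_le_add (hends i₁ j₁) (hends i₂ j₂)) |>.trans (by omega))
    intro x hx
    rw [Finset.mem_filter] at hx
    simp only [Covers, InCore, Finset.mem_union, Finset.mem_Ico] at hx ⊢
    omega

def Exposed (F G : List (LTree α)) (k : ℕ) (π : Piece) (x : ℕ) : Prop :=
  Covers π x ∧ (¬ MatchedPiece F G k π ∨ ¬ InCore k π x)

open Classical in
theorem card_filter_exposed_le {F G : List (LTree α)} {k : ℕ} {π : Piece}
    (hsm : psize π ≤ 4 * k ∨ MatchedPiece F G k π) (n : ℕ) :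
    ((Finset.range n).filter (Exposed F G k π ·)).card ≤ 8 * k := by
  rcases hsm with hsmall | hm
  · refine (Finset.card_le_card ?_).trans ((card_filter_covers_le_psize π n).trans (by omega))
    intro x hx
    rw [Finset.mem_filter] at hx ⊢
    exact ⟨hx.1, hx.2.1⟩
  · refine (Finset.card_le_card ?_).trans (card_filter_covers_not_inCore_le π n k)
    intro x hx
    rw [Finset.mem_filter] at hx ⊢
    exact ⟨hx.1, hx.2.1, hx.2.2.resolve_left (not_not.mpr hm)⟩

/-- The mate of an unkept core position is covered by the same piece, since pieces are made of
balanced words, but lies outside its core. -/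
theorem exposed_or_mate_exposed_of_not_kept {F G : List (LTree α)} {k : ℕ} {pieces : List Piece}
    {π : Piece} (hπ : π ∈ pieces) (hv : ValidPiece F π) {p : ℕ} (hp : p < (pforest F).length)
    (hcov : Covers π p) (hnk : ¬ Kept F G k pieces p) :
    Exposed F G k π p ∨ ∃ q < (pforest F).length, Exposed F G k π q ∧ mate F q = p := by
  by_cases hcore : MatchedPiece F G k π ∧ InCore k π p
  · right
    obtain ⟨u, hu, hpu⟩ := exists_fnodes_of_lt F p hp
    have hb := fnodes_bounds F u hu
    have hcovu := hv.covers_iff (o := u.1) (c := u.2) hu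
    have hmate := mate_of_mem_fnodes hu
    have hnotkept : ¬ (InCore k π u.1 ∧ InCore k π u.2) := fun h =>
      hnk ⟨u, ⟨hu, π, hπ, hcore.1, h⟩, hpu⟩
    rcases hpu with rfl | rfl
    · exact ⟨u.2, by omega, ⟨hcovu.mp hcov, Or.inr fun h => hnotkept ⟨hcore.2, h⟩⟩, hmate.2⟩
    · exact ⟨u.1, by omega, ⟨hcovu.mpr hcov, Or.inr fun h => hnotkept ⟨h, hcore.2⟩⟩, hmate.1⟩
  · exact Or.inl ⟨hcov, by tauto⟩

open Classical in
theorem card_filter_not_kept_le {F G : List (LTree α)} {k : ℕ} {pieces : List Piece}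
    (hval : ∀ π ∈ pieces, ValidPiece F π)
    (hcov : ∀ p, p < (pforest F).length → ∃ π ∈ pieces, Covers π p)
    (hsm : ∀ π ∈ pieces, psize π ≤ 4 * k ∨ MatchedPiece F G k π) :
    ((Finset.range (pforest F).length).filter (¬ Kept F G k pieces ·)).card ≤
      16 * k * pieces.length := by
  set bad : Piece → Finset ℕ := fun π =>
    (Finset.range (pforest F).length).filter (Exposed F G k π ·)
  have hsub : (Finset.range (pforest F).length).filter (¬ Kept F G k pieces ·) ⊆
      pieces.toFinset.biUnion fun π => bad π ∪ (bad π).image (mate F) := by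
    intro p hp
    simp only [Finset.mem_filter, Finset.mem_range] at hp
    obtain ⟨π, hπ, hcovp⟩ := hcov p hp.1
    simp only [bad, Finset.mem_biUnion, List.mem_toFinset, Finset.mem_union, Finset.mem_image,
      Finset.mem_filter, Finset.mem_range]
    refine ⟨π, hπ, ?_⟩
    rcases exposed_or_mate_exposed_of_not_kept hπ (hval π hπ) hp.1 hcovp hp.2 with h | ⟨q, hq, h⟩
    · exact Or.inl ⟨hp.1, h⟩
    · exact Or.inr ⟨q, ⟨hq, h.1⟩, h.2⟩
  calc _ ≤ _ := Finset.card_le_card hsub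
    _ ≤ ∑ π ∈ pieces.toFinset, (bad π ∪ (bad π).image (mate F)).card := Finset.card_biUnion_le
    _ ≤ ∑ π ∈ pieces.toFinset, 16 * k := Finset.sum_le_sum fun π hπ =>
        (Finset.card_union_le _ _).trans (by
          have : (bad π).card ≤ 8 * k :=
            card_filter_exposed_le (hsm π (List.mem_toFinset.mp hπ)) (pforest F).length
          have := (bad π).card_image_le (f := mate F)
          omega)
    _ ≤ 16 * k * pieces.length := by
        rw [Finset.sum_const, smul_eq_mul, mul_comm]
        exact Nat.mul_le_mul_left _ pieces.toFinset_card_le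

theorem length_le_length_keptMatching {F G : List (LTree α)} {k : ℕ} {pieces : List Piece}
    (hval : ∀ π ∈ pieces, ValidPiece F π)
    (hcov : ∀ p, p < (pforest F).length → ∃ π ∈ pieces, Covers π p)
    (hsm : ∀ π ∈ pieces, psize π ≤ 4 * k ∨ MatchedPiece F G k π) :
    (pforest F).length ≤ (keptMatching F G k pieces).length + 16 * k * pieces.length := by
  classical
  have hsplit := List.length_eq_length_filter_add (l := List.range (pforest F).length)
    (Kept F G k pieces ·)
  rw [List.length_range] at hsplit
  have hbad := card_filter_not_kept_le hval hcov hsm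
  have hcard : ((Finset.range (pforest F).length).filter (¬ Kept F G k pieces ·)).card =
      ((List.range (pforest F).length).filter fun p => !decide (Kept F G k pieces p)).length := by
    simp [Finset.card_def, Finset.filter_val, Finset.range_val, Multiset.range]
  rw [keptMatching, List.length_map]
  omega

end Counting

/-- If the piece-decomposition matching process on `str(F)` with threshold `k`
produces a complete matching — a collection of pairwise disjoint pieces covering
every position of `str(F)`, at most `2·k·(log₂|F| + 1)` of them, each either small
(size at most `4k`) or exactly matched in `str(G)` up to an index shift of at most
`k` — then `ted(F,G) = O(k² log |F|)` : indeed, the matched pieces, truncated at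
each end, together with deletions for all unmatched positions, form a valid tree
alignment of cost `O(k² log |F|)`. -/
theorem stmt19 :
    ∃ Cst : ℕ, ∀ (α : Type) [DecidableEq α] (k : ℕ) (F G : List (LTree α))
      (pieces : List Piece),
      fsize G ≤ fsize F →
      (∀ π ∈ pieces, ValidPiece F π) →
      List.Pairwise (fun π₁ π₂ => ∀ p, ¬(Covers π₁ p ∧ Covers π₂ p)) pieces →
      (∀ p, p < (pforest F).length → ∃ π ∈ pieces, Covers π p) →
      pieces.length ≤ 2 * k * (Nat.log 2 (fsize F) + 1) →
      (∀ π ∈ pieces, psize π ≤ 4 * k ∨ MatchedPiece F G k π) →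
      ted F G ≤ Cst * k ^ 2 * (Nat.log 2 (fsize F) + 1) ∧
        ∀ d : Bool × α, ∃ M, TreeAligned F G M ∧
          alignCost (pforest F) (pforest G) d M ≤
            Cst * k ^ 2 * (Nat.log 2 (fsize F) + 1) := by
  refine ⟨64, fun α _ k F G pieces hFG hval hdisj hcov hnum hsm => ?_⟩
  have hM := keptMatching_treeAligned (G := G) (k := k) hval hdisj
  have hexact := keptMatching_exact (G := G) (k := k) hval hdisj
  have hlen := length_le_length_keptMatching (G := G) hval hcov hsm
  set M := keptMatching F G k pieces
  have hGF : (pforest G).length ≤ (pforest F).length := by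
    rw [length_pforest, length_pforest]; omega
  have hpieces : 16 * k * pieces.length ≤ 32 * (k ^ 2 * (Nat.log 2 (fsize F) + 1)) :=
    (Nat.mul_le_mul_left _ hnum).trans_eq (by ring)
  have hcost : (pforest F).length - M.length + ((pforest G).length - M.length) ≤
      64 * k ^ 2 * (Nat.log 2 (fsize F) + 1) := by
    rw [mul_assoc]; omega
  refine ⟨by have := two_mul_ted_le hM hexact; omega, fun d => ⟨M, hM, ?_⟩⟩
  rwa [alignCost_of_exact d hexact]
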